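/- In the braid group B_4, the word σ1 σ2⁻¹ σ1 σ2⁻¹ σ2⁻¹ σ1 σ3 σ2 σ2 σ2 σ3 (a braid representative of the knot 11n40) equals the product of the positive bands of its band decomposition with band centers {1, 3, 6, 7, 11}; in particular, this braid is quasipositive. -/

import Mathlib

/-- The Artin relations for the braid group with `m` generators
`σ_1, …, σ_m` (indexed by `Fin m`), i.e. the braid group `B_{m+1}`:
`σ_i σ_j = σ_j σ_i` for `|i - j| ≥ 2`, and
`σ_i σ_{i+1} σ_i = σ_{i+1} σ_i σ_{i+1}`. -/
def braidRels (m : ℕ) : Set (FreeGroup (Fin m)) :=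
  { r | (∃ i j : Fin m, (i : ℕ) + 2 ≤ (j : ℕ) ∧
          r = FreeGroup.of i * FreeGroup.of j * (FreeGroup.of i)⁻¹ * (FreeGroup.of j)⁻¹) ∨
        (∃ i j : Fin m, (i : ℕ) + 1 = (j : ℕ) ∧
          r = FreeGroup.of i * FreeGroup.of j * FreeGroup.of i *
              (FreeGroup.of j)⁻¹ * (FreeGroup.of i)⁻¹ * (FreeGroup.of j)⁻¹) }

/-- The braid group `B_{m+1}`, presented with `m` Artin generators.
Here index `i : Fin m` corresponds to the Artin generator `σ_{i+1}`. -/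
abbrev BraidGrp (m : ℕ) := PresentedGroup (braidRels m)

/-- The Artin generator `σ_{i+1}` of the braid group `B_{m+1}`. -/
def σ {m : ℕ} (i : Fin m) : BraidGrp m := PresentedGroup.of i

/-- A letter of a braid word: a generator index together with a sign
(`true` = the positive generator, `false` = its inverse). -/
abbrev Letter (m : ℕ) := Fin m × Bool

/-- The group element represented by a letter. -/
def letterEl {m : ℕ} (x : Letter m) : BraidGrp m :=
  if x.2 then σ x.1 else (σ x.1)⁻¹

/-- The group element represented by a braid word. -/
def wordProd {m : ℕ} (w : List (Letter m)) : BraidGrp m :=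
  (w.map letterEl).prod

/-- The band of the band decomposition of the word `w` with band centers `S`
(1-based positions) at center `p`: namely `α_p * x_p * α_p⁻¹`, where `x_p` is
the letter of `w` at position `p` and `α_p` is the product, in increasing
order of position, of the letters of `w` at positions `q < p` with `q ∉ S`. -/
def band {m : ℕ} (w : List (Letter m)) (S : List ℕ) (p : ℕ) : BraidGrp m :=
  let α : BraidGrp m :=
    wordProd (((w.zipIdx.map Prod.swap).filter fun qx => decide (qx.1 + 1 < p ∧ qx.1 + 1 ∉ S)).map Prod.snd)
  match w[p - 1]? with
  | some x => α * letterEl x * α⁻¹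
  | none => 1

/-- The product, in increasing order of band center, of the bands of the
band decomposition of the word `w` with band centers `S`. -/
def bandProd {m : ℕ} (w : List (Letter m)) (S : List ℕ) : BraidGrp m :=
  (S.map (band w S)).prod

/-- A positive band in the braid group: a conjugate `α σ_j α⁻¹` of a generator. -/
def IsPositiveBand {m : ℕ} (x : BraidGrp m) : Prop :=
  ∃ (α : BraidGrp m) (j : Fin m), x = α * σ j * α⁻¹

/-- A braid is quasipositive if it is a product of positive bands. -/
def IsQuasipositive {m : ℕ} (x : BraidGrp m) : Prop :=
  ∃ l : List (BraidGrp m), (∀ b ∈ l, IsPositiveBand b) ∧ x = l.prod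

/-- A negative band in the braid group: a conjugate `α σ_j⁻¹ α⁻¹` of the
inverse of a generator. -/
def IsNegativeBand {m : ℕ} (x : BraidGrp m) : Prop :=
  ∃ (α : BraidGrp m) (j : Fin m), x = α * (σ j)⁻¹ * α⁻¹

/-- A braid is quasinegative if it is a product of negative bands. -/
def IsQuasinegative {m : ℕ} (x : BraidGrp m) : Prop :=
  ∃ l : List (BraidGrp m), (∀ b ∈ l, IsNegativeBand b) ∧ x = l.prod

/-- The braid word for the knot `11n40` (letter `(i, true)` is `σ_(i+1)`,
`(i, false)` is `σ_(i+1)⁻¹`). -/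
def theWord : List (Letter 3) :=
  [(0, true), (1, false), (0, true), (1, false), (1, false), (0, true), (2, true), (1, true), (1, true), (1, true), (2, true)]

/-- The band centers. -/
def theCenters : List ℕ := [1, 3, 6, 7, 11]

/-!
Consecutive conjugators telescope: if `p < p'` are adjacent centers then `α_p⁻¹ α_p'` is the
product of the letters strictly between them, so the band product followed by the product of all
non-center letters spells out the word again. For `11n40` the non-center letters are
`σ₂⁻¹ σ₂⁻¹ σ₂⁻¹ σ₂ σ₂ σ₂`, which cancel freely, and every center carries a positive letter.
-/

/-- Positions in `S` are 1-based, as in `band`. -/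
def deleteCenters {m : ℕ} (w : List (Letter m)) (S : List ℕ) : List (Letter m) :=
  ((w.zipIdx.map Prod.swap).filter fun qx => decide (qx.1 + 1 ∉ S)).map Prod.snd

theorem wordProd_append {m : ℕ} (u v : List (Letter m)) :
    wordProd (u ++ v) = wordProd u * wordProd v := by
  simp [wordProd]

theorem wordProd_singleton {m : ℕ} (x : Letter m) : wordProd [x] = letterEl x := by
  simp [wordProd]

theorem filter_lt_and_not_mem_eq_deleteCenters_take {m : ℕ} (w : List (Letter m)) (S : List ℕ)
    (p : ℕ) :
    ((w.zipIdx.map Prod.swap).filter fun qx => decide (qx.1 + 1 < p ∧ qx.1 + 1 ∉ S)) =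
      ((w.take (p - 1)).zipIdx.map Prod.swap).filter fun qx => decide (qx.1 + 1 ∉ S) := by
  conv_lhs => rw [← w.take_append_drop (p - 1)]
  rw [List.zipIdx_append, List.map_append, List.filter_append]
  have hdrop : ((w.drop (p - 1)).zipIdx (0 + (w.take (p - 1)).length) |>.map Prod.swap).filter
      (fun qx => decide (qx.1 + 1 < p ∧ qx.1 + 1 ∉ S)) = [] := by
    refine List.filter_eq_nil_iff.mpr fun qx h => ?_
    obtain ⟨⟨x, q⟩, hmem, rfl⟩ := List.mem_map.mp h
    have hq := List.mem_zipIdx hmem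
    simp only [List.length_take, List.length_drop] at hq
    simp only [Prod.swap_prod_mk, decide_eq_true_eq, not_and]
    omega
  rw [hdrop, List.append_nil]
  refine List.filter_congr fun qx h => ?_
  obtain ⟨⟨x, q⟩, hmem, rfl⟩ := List.mem_map.mp h
  have hq := (List.mem_zipIdx' hmem).1
  rw [List.length_take] at hq
  simp only [Prod.swap_prod_mk, show q + 1 < p by omega, true_and]

theorem deleteCenters_take_succ {m : ℕ} (w : List (Letter m)) (S : List ℕ) (n : ℕ)
    (hn : n < w.length) :
    deleteCenters (w.take (n + 1)) S =
      deleteCenters (w.take n) S ++ if n + 1 ∈ S then [] else [w[n]] := by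
  rw [deleteCenters, deleteCenters, ← List.take_concat_get' w n hn, List.zipIdx_append]
  split_ifs with h <;> simp [h, List.filter_append, hn.le]

theorem band_eq_of_getElem? {m : ℕ} {w : List (Letter m)} {p : ℕ} {x : Letter m}
    (S : List ℕ) (h : w[p - 1]? = some x) :
    band w S p = wordProd (deleteCenters (w.take (p - 1)) S) * letterEl x *
      (wordProd (deleteCenters (w.take (p - 1)) S))⁻¹ := by
  simp only [band, h, deleteCenters, filter_lt_and_not_mem_eq_deleteCenters_take]

theorem wordProd_take_eq_mul_deleteCenters {m : ℕ} (w : List (Letter m)) (S : List ℕ) {n : ℕ}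
    (hn : n ≤ w.length) :
    wordProd (w.take n) = (((List.range' 1 n).filter (· ∈ S)).map (band w S)).prod *
      wordProd (deleteCenters (w.take n) S) := by
  induction n with
  | zero => simp [deleteCenters, wordProd]
  | succ n ih =>
    have hn' : n < w.length := hn
    have hband := band_eq_of_getElem? (p := n + 1) S (List.getElem?_eq_getElem hn')
    rw [Nat.add_sub_cancel] at hband
    rw [← List.take_concat_get' w n hn', wordProd_append, ih hn'.le, List.take_concat_get' w n hn',
      deleteCenters_take_succ w S n hn', List.range'_1_concat, List.filter_append]
    by_cases hS : n + 1 ∈ S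
    · simp [hS, Nat.add_comm 1 n, hband, wordProd_singleton, mul_assoc]
    · simp [hS, Nat.add_comm 1 n, wordProd_append, wordProd_singleton, mul_assoc]

theorem filter_range'_mem_eq {S : List ℕ} {L : ℕ} (hS : S.Pairwise (· < ·))
    (hS_range : ∀ p ∈ S, 1 ≤ p ∧ p ≤ L) : (List.range' 1 L).filter (· ∈ S) = S := by
  refine (List.pairwise_lt_range' (s := 1) (n := L)).filter _ |>.eq_of_mem_iff hS fun p => ?_
  simp only [List.mem_filter, List.mem_range'_1, decide_eq_true_eq]
  exact ⟨And.right, fun hp => ⟨by have := hS_range p hp; omega, hp⟩⟩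

theorem wordProd_eq_bandProd_mul_deleteCenters {m : ℕ} (w : List (Letter m)) {S : List ℕ}
    (hS : S.Pairwise (· < ·)) (hS_range : ∀ p ∈ S, 1 ≤ p ∧ p ≤ w.length) :
    wordProd w = bandProd w S * wordProd (deleteCenters w S) := by
  simpa [bandProd, filter_range'_mem_eq hS hS_range] using
    wordProd_take_eq_mul_deleteCenters w S le_rfl

theorem isPositiveBand_band {m : ℕ} {w : List (Letter m)} {p : ℕ} {j : Fin m}
    (S : List ℕ) (h : w[p - 1]? = some (j, true)) : IsPositiveBand (band w S p) :=
  ⟨_, j, band_eq_of_getElem? S h⟩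

theorem isQuasipositive_bandProd {m : ℕ} {w : List (Letter m)} {S : List ℕ}
    (h : ∀ p ∈ S, ∃ j, w[p - 1]? = some (j, true)) : IsQuasipositive (bandProd w S) := by
  refine ⟨S.map (band w S), List.forall_mem_map.mpr fun p hp => ?_, rfl⟩
  obtain ⟨j, hj⟩ := h p hp
  exact isPositiveBand_band S hj

theorem wordProd_deleteCenters_theWord : wordProd (deleteCenters theWord theCenters) = 1 := by
  have : deleteCenters theWord theCenters =
      [(1, false), (1, false), (1, false), (1, true), (1, true), (1, true)] := by decide
  simp [this, wordProd, letterEl]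

/-- The braid representative of `11n40` equals the product of the bands of its
band decomposition with the given band centers; in particular it is quasipositive. -/
theorem knot_11n40_quasipositive :
    wordProd theWord = bandProd theWord theCenters ∧
      IsQuasipositive (wordProd theWord) := by
  have hdecomp : wordProd theWord = bandProd theWord theCenters := by
    rw [wordProd_eq_bandProd_mul_deleteCenters theWord (S := theCenters) (by decide) (by decide),
      wordProd_deleteCenters_theWord, mul_one]
  exact ⟨hdecomp, hdecomp ▸ isQuasipositive_bandProd (by decide)⟩
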